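/- Let P be a prime graph and k a positive integer. Then the automorphism group of the k-fold box product P^{□k} has cardinality k! · |Aut(P)|^k. -/

import Mathlib

open SimpleGraph

/-- The box (Cartesian) product of a finite family of simple graphs. -/
def boxProdFamily {k : ℕ} {W : Fin k → Type} (P : ∀ i, SimpleGraph (W i)) :
    SimpleGraph (∀ i, W i) where
  Adj u v := ∃ j, (P j).Adj (u j) (v j) ∧ ∀ i, i ≠ j → u i = v i
  symm := ⟨fun _ _ ⟨j, hadj, h⟩ => ⟨j, hadj.symm, fun i hi => (h i hi).symm⟩⟩
  loopless := ⟨fun _ ⟨j, hadj, _⟩ => (P j).loopless.irrefl _ hadj⟩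

/-- The `k`-fold box product `P □ P □ ⋯ □ P` of a simple graph `P`. -/
def boxProdPow {V : Type} (P : SimpleGraph V) (k : ℕ) : SimpleGraph (Fin k → V) :=
  boxProdFamily fun _ : Fin k => P

/-- A finite simple graph is prime with respect to the box product. -/
def SimpleGraph.IsPrime {V : Type} [Fintype V] (G : SimpleGraph V) : Prop :=
  G.Connected ∧ 2 ≤ Fintype.card V ∧
    ∀ (V₁ V₂ : Type) [Fintype V₁] [Fintype V₂]
      (H₁ : SimpleGraph V₁) (H₂ : SimpleGraph V₂),
      Nonempty (G ≃g H₁.boxProd H₂) →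
      Fintype.card V₁ = 1 ∨ Fintype.card V₂ = 1

/-! Distances in a box product add up over the coordinates, so a layer
`{x | ∀ t ≠ i, x t = a t}` (a copy of `P`) is geodesically convex. Its image under an
automorphism `φ` is then convex too, hence closed under exchanging coordinates of two of its
points, hence the product of its coordinate projections. As `P` is prime, all projections but one
are points: `φ` maps layers onto layers. Chasing directions around a square shows that the
induced permutation `π` of directions is the same at every vertex, and then `(φ x) (π i)` depends
only on `x i`, through an automorphism of `P`. So every automorphism is
`x ↦ (j ↦ ψ j (x (σ j)))` for a unique pair `(σ, ψ)`. -/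

open Function

theorem Set.eq_univ_pi_of_piecewise_mem {ι : Type*} [Fintype ι] [DecidableEq ι]
    {β : ι → Type*} {S : Set (∀ i, β i)} (hS : S.Nonempty)
    (h : ∀ x ∈ S, ∀ y ∈ S, ∀ T : Finset ι, T.piecewise x y ∈ S) :
    S = Set.univ.pi fun i => eval i '' S := by
  refine (Set.subset_pi_eval_image _ S).antisymm fun z hz => ?_
  have approx : ∀ T : Finset ι, ∃ w ∈ S, ∀ t ∈ T, w t = z t := by
    intro T
    induction T using Finset.induction_on with
    | empty => exact ⟨hS.choose, hS.choose_spec, by simp⟩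
    | insert b T _ ih =>
      obtain ⟨w, hwS, hw⟩ := ih
      obtain ⟨s, hsS, hs⟩ := hz b trivial
      refine ⟨({b} : Finset ι).piecewise s w, h s hsS w hwS {b}, fun t ht => ?_⟩
      rw [Finset.piecewise_singleton]
      rcases eq_or_ne t b with rfl | htb
      · simpa using hs
      · rw [update_of_ne htb]
        exact hw t ((Finset.mem_insert.mp ht).resolve_left htb)
  obtain ⟨w, hwS, hw⟩ := approx Finset.univ
  exact funext (fun t => hw t (Finset.mem_univ t)) ▸ hwS

namespace SimpleGraph

theorem Iso.dist_map_le {α β : Type*} {G : SimpleGraph α} {H : SimpleGraph β} (f : G ≃g H)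
    (u v : α) : H.dist (f u) (f v) ≤ G.dist u v := by
  by_cases hr : G.Reachable u v
  · obtain ⟨w, hw⟩ := hr.exists_walk_length_eq_dist
    simpa [hw] using dist_le (w.map f.toHom)
  · rw [dist_eq_zero_of_not_reachable hr,
      dist_eq_zero_of_not_reachable (Iso.reachable_iff.not.mpr hr)]

theorem Iso.dist_map {α β : Type*} {G : SimpleGraph α} {H : SimpleGraph β} (f : G ≃g H)
    (u v : α) : H.dist (f u) (f v) = G.dist u v :=
  (f.dist_map_le u v).antisymm (by simpa using f.symm.dist_map_le (f u) (f v))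

def boxProdUniqueLeftIso {α β : Type*} [Unique α] (G : SimpleGraph α) (H : SimpleGraph β) :
    G.boxProd H ≃g H where
  toEquiv := Equiv.uniqueProd β α
  map_rel_iff' {p q} := by
    obtain ⟨a, b⟩ := p
    obtain ⟨a', b'⟩ := q
    obtain rfl := Subsingleton.elim a a'
    simp [boxProd_adj]

end SimpleGraph

namespace boxProdFamily

variable {k : ℕ} {W : Fin k → Type} {G : ∀ i, SimpleGraph (W i)}

def layer (i : Fin k) (a : ∀ i, W i) : Set (∀ i, W i) := {x | ∀ t, t ≠ i → x t = a t}

theorem mem_layer_self (i : Fin k) (a : ∀ i, W i) : a ∈ layer i a := fun _ _ => rfl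

theorem update_mem_layer (i : Fin k) (a : ∀ i, W i) (v : W i) : update a i v ∈ layer i a :=
  fun _ ht => update_of_ne ht v a

theorem layer_eq_of_mem {i : Fin k} {a b : ∀ i, W i} (h : b ∈ layer i a) :
    layer i b = layer i a :=
  Set.ext fun _ => ⟨fun hx t ht => (hx t ht).trans (h t ht),
    fun hx t ht => (hx t ht).trans (h t ht).symm⟩

theorem apply_ne_of_mem_layer {i : Fin k} {a x : ∀ i, W i} (hx : x ∈ layer i a)
    (hne : x ≠ a) : x i ≠ a i := fun h => hne <| funext fun t => by
  rcases eq_or_ne t i with rfl | ht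
  exacts [h, hx t ht]

theorem eq_of_layer_subset {i j : Fin k} [Nontrivial (W i)] {a b : ∀ i, W i}
    (h : layer i a ⊆ layer j b) : i = j := by
  by_contra hij
  obtain ⟨v, hv⟩ := exists_ne (a i)
  have := h (update_mem_layer i a v) i hij
  rw [update_self, ← h (mem_layer_self i a) i hij] at this
  exact hv this

theorem eq_of_forall_mem_layer {β : Type*} {f : (∀ i, W i) → β} {s : Finset (Fin k)}
    (hf : ∀ m ∈ s, ∀ x, ∀ x' ∈ layer m x, f x' = f x) {x y : ∀ i, W i}
    (hxy : ∀ t ∉ s, x t = y t) : f x = f y := by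
  induction s using Finset.induction_on generalizing x with
  | empty => rw [funext fun t => hxy t (Finset.notMem_empty t)]
  | insert a s _ ih =>
    have hstep : f (update x a (y a)) = f x :=
      hf a (Finset.mem_insert_self a s) x _ (update_mem_layer a x (y a))
    refine hstep.symm.trans (ih (fun m hm => hf m (Finset.mem_insert_of_mem hm)) fun t ht => ?_)
    rcases eq_or_ne t a with rfl | hta
    · simp
    · rw [update_of_ne hta]
      exact hxy t (by simp [ht, hta])

-- Opposite sides of a square in a box product run in the same direction.
theorem eq_of_square {p q r s : ∀ i, W i} {a a' c d : Fin k}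
    (hq : q ∈ layer c p) (hqp : q ≠ p) (hr : r ∈ layer a p) (hrp : r ≠ p)
    (hs : s ∈ layer a' q) (hsr : s ∈ layer d r) (hac : a ≠ c) (ha'c : a' ≠ c) : a = a' := by
  by_contra haa'
  have hda : d = a := by
    by_contra hda
    refine apply_ne_of_mem_layer hr hrp ?_
    rw [← hsr a (Ne.symm hda), hs a haa', hq a hac]
  have hdc : d = c := by
    by_contra hdc
    refine apply_ne_of_mem_layer hq hqp ?_
    rw [← hs c (Ne.symm ha'c), hsr c (Ne.symm hdc), hr c (Ne.symm hac)]
  exact hac (hda.symm.trans hdc)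

def updateHom (a : ∀ i, W i) (i : Fin k) : G i →g boxProdFamily G where
  toFun := update a i
  map_rel' h := ⟨i, by simpa using h, fun t ht => by simp [update_of_ne ht]⟩

theorem updateHom_apply (a : ∀ i, W i) (i : Fin k) (v : W i) :
    (updateHom a i : G i →g boxProdFamily G) v = update a i v :=
  rfl

def layerIso (i : Fin k) (a : ∀ i, W i) : G i ≃g (boxProdFamily G).induce (layer i a) where
  toFun v := ⟨update a i v, update_mem_layer i a v⟩
  invFun x := x.1 i
  left_inv v := update_self i v a
  right_inv x := Subtype.ext <| funext fun t => by
    rcases eq_or_ne t i with rfl | ht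
    · simp
    · exact (update_of_ne ht _ a).trans (x.2 t ht).symm
  map_rel_iff' {u v} := by
    refine ⟨fun ⟨j, hj, _⟩ => ?_, fun h => (updateHom a i).map_rel h⟩
    rcases eq_or_ne j i with rfl | hji
    · simpa using hj
    · simp [update_of_ne hji] at hj

def induceUnivPiIso (C : ∀ i, Set (W i)) :
    (boxProdFamily G).induce (Set.univ.pi C) ≃g boxProdFamily fun i => (G i).induce (C i) where
  toEquiv := Equiv.Set.univPi C
  map_rel_iff' :=
    ⟨fun ⟨j, hj, h⟩ => ⟨j, hj, fun t ht => congrArg Subtype.val (h t ht)⟩,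
      fun ⟨j, hj, h⟩ => ⟨j, hj, fun t ht => Subtype.ext (h t ht)⟩⟩

def consIso {W : Fin (k + 1) → Type} (G : ∀ i, SimpleGraph (W i)) :
    boxProdFamily G ≃g (G 0).boxProd (boxProdFamily fun i : Fin k => G i.succ) where
  toEquiv := (Fin.consEquiv W).symm
  map_rel_iff' {u v} := by
    simp [boxProdFamily, boxProd_adj, Fin.consEquiv, Fin.exists_fin_succ, Fin.forall_fin_succ,
      funext_iff, Fin.tail, (Fin.succ_ne_zero _).symm, and_comm, and_left_comm]

theorem exists_walk_length_le_sum (hG : ∀ i, (G i).Connected) (s : Finset (Fin k))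
    {x y : ∀ i, W i} (h : ∀ t ∉ s, x t = y t) :
    ∃ w : (boxProdFamily G).Walk x y, w.length ≤ ∑ t ∈ s, (G t).dist (x t) (y t) := by
  induction s using Finset.induction_on generalizing x with
  | empty =>
    obtain rfl : x = y := funext fun t => h t (Finset.notMem_empty t)
    exact ⟨.nil, by simp⟩
  | insert a s ha ih =>
    obtain ⟨p, hp⟩ := (hG a).exists_walk_length_eq_dist (x a) (y a)
    obtain ⟨w, hw⟩ := ih (x := update x a (y a)) fun t ht => by
      rcases eq_or_ne t a with rfl | hta
      · simp
      · rw [update_of_ne hta]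
        exact h t (by simp [ht, hta])
    let lift : (boxProdFamily G).Walk x (update x a (y a)) :=
      (p.map (updateHom x a)).copy (by rw [updateHom_apply, update_eq_self])
        (updateHom_apply x a (y a))
    have hs : ∑ t ∈ s, (G t).dist (update x a (y a) t) (y t) =
        ∑ t ∈ s, (G t).dist (x t) (y t) :=
      Finset.sum_congr rfl fun t ht => by rw [update_of_ne (ne_of_mem_of_not_mem ht ha)]
    refine ⟨lift.append w, ?_⟩
    rw [Walk.length_append, Walk.length_copy, Walk.length_map, hp, Finset.sum_insert ha, ← hs]
    omega

theorem sum_dist_le_length (hG : ∀ i, (G i).Connected) {x y : ∀ i, W i}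
    (w : (boxProdFamily G).Walk x y) : ∑ t, (G t).dist (x t) (y t) ≤ w.length := by
  induction w with
  | nil => simp
  | @cons u z v h p ih =>
    obtain ⟨j, hj, hother⟩ := h
    have hstep : ∑ t, (G t).dist (u t) (z t) = 1 := by
      rw [Finset.sum_eq_single j (fun t _ htj => by rw [hother t htj, dist_self]) (by simp)]
      exact dist_eq_one_iff_adj.mpr hj
    calc ∑ t, (G t).dist (u t) (v t)
        ≤ ∑ t, ((G t).dist (u t) (z t) + (G t).dist (z t) (v t)) :=
          Finset.sum_le_sum fun t _ => (hG t).dist_triangle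
      _ ≤ p.length + 1 := by rw [Finset.sum_add_distrib, hstep]; omega

theorem dist_eq_sum (hG : ∀ i, (G i).Connected) (x y : ∀ i, W i) :
    (boxProdFamily G).dist x y = ∑ t, (G t).dist (x t) (y t) := by
  obtain ⟨w, hw⟩ := exists_walk_length_le_sum hG Finset.univ (x := x) (y := y) (by simp)
  obtain ⟨w', hw'⟩ := w.reachable.exists_walk_length_eq_dist
  exact le_antisymm ((dist_le w).trans hw) (hw' ▸ sum_dist_le_length hG w')

theorem dist_piecewise_add_dist (hG : ∀ i, (G i).Connected) (T : Finset (Fin k))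
    (x y : ∀ i, W i) :
    (boxProdFamily G).dist x (T.piecewise x y) + (boxProdFamily G).dist (T.piecewise x y) y =
      (boxProdFamily G).dist x y := by
  simp only [dist_eq_sum hG, ← Finset.sum_add_distrib]
  refine Finset.sum_congr rfl fun t _ => ?_
  by_cases ht : t ∈ T <;> simp [ht]

theorem mem_layer_of_dist_add_dist_eq (hG : ∀ i, (G i).Connected) {i : Fin k}
    {a x y u : ∀ i, W i} (hx : x ∈ layer i a) (hy : y ∈ layer i a)
    (h : (boxProdFamily G).dist x u + (boxProdFamily G).dist u y = (boxProdFamily G).dist x y) :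
    u ∈ layer i a := by
  simp only [dist_eq_sum hG, ← Finset.sum_add_distrib] at h
  have hterm := (Finset.sum_eq_sum_iff_of_le fun t _ => (hG t).dist_triangle).mp h.symm
  intro t ht
  have h0 := hterm t (Finset.mem_univ t)
  rw [hx t ht, hy t ht, dist_self] at h0
  exact ((hG t).dist_eq_zero_iff.mp (by omega : (G t).dist (a t) (u t) = 0)).symm

theorem piecewise_mem_image_layer {l : ℕ} {W' : Fin l → Type} {H : ∀ i, SimpleGraph (W' i)}
    (hG : ∀ i, (G i).Connected) (hH : ∀ i, (H i).Connected)
    (φ : boxProdFamily G ≃g boxProdFamily H) {i : Fin k} {a : ∀ i, W i} {x y : ∀ i, W' i}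
    (hx : x ∈ φ '' layer i a) (hy : y ∈ φ '' layer i a) (T : Finset (Fin l)) :
    T.piecewise x y ∈ φ '' layer i a := by
  obtain ⟨p, hp, rfl⟩ := hx
  obtain ⟨q, hq, rfl⟩ := hy
  refine ⟨φ.symm (T.piecewise (φ p) (φ q)), mem_layer_of_dist_add_dist_eq hG hp hq ?_,
    by simp⟩
  rw [← φ.dist_map, ← φ.dist_map, ← φ.dist_map, φ.apply_symm_apply]
  exact dist_piecewise_add_dist hH T (φ p) (φ q)

end boxProdFamily

theorem SimpleGraph.IsPrime.nontrivial {V : Type} [Fintype V] {P : SimpleGraph V}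
    (hP : P.IsPrime) : Nontrivial V :=
  Fintype.one_lt_card_iff_nontrivial.mp hP.2.1

theorem SimpleGraph.IsPrime.exists_card_eq_one_of_iso {V : Type} [Fintype V] {P : SimpleGraph V}
    (hP : P.IsPrime) :
    ∀ {k : ℕ} {W : Fin k → Type} [∀ i, Fintype (W i)] {G : ∀ i, SimpleGraph (W i)},
      (P ≃g boxProdFamily G) → ∃ j, ∀ i, i ≠ j → Fintype.card (W i) = 1 := by
  intro k
  induction k with
  | zero =>
    intro W _ G e
    have := hP.2.1
    simp [Fintype.card_congr e.toEquiv] at this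
  | succ k ih =>
    intro W _ G e
    let e' := e.trans (boxProdFamily.consIso G)
    rcases hP.2.2 _ _ _ _ ⟨e'⟩ with hhead | htail
    · obtain ⟨_⟩ := Fintype.card_eq_one_iff_nonempty_unique.mp hhead
      obtain ⟨j, hj⟩ := ih (e'.trans (boxProdUniqueLeftIso _ _))
      refine ⟨j.succ, Fin.cases (fun _ => hhead) fun i hi => hj i (mt (congrArg _) hi)⟩
    · refine ⟨0, Fin.cases (fun h => (h rfl).elim) fun i _ => ?_⟩
      rw [Fintype.card_pi] at htail
      exact Nat.eq_one_of_dvd_one (htail ▸ Finset.dvd_prod_of_mem _ (Finset.mem_univ i))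

namespace boxProdPow

open boxProdFamily

variable {V : Type} {P : SimpleGraph V} {k : ℕ}

def wreath (σ : Equiv.Perm (Fin k)) (ψ : Fin k → P ≃g P) :
    boxProdPow P k ≃g boxProdPow P k where
  toEquiv := (σ.symm.arrowCongr (Equiv.refl V)).trans
    (Equiv.piCongrRight fun j => (ψ j).toEquiv)
  map_rel_iff' {x y} := by
    change (∃ j, P.Adj (ψ j (x (σ j))) (ψ j (y (σ j))) ∧
        ∀ i, i ≠ j → ψ i (x (σ i)) = ψ i (y (σ i))) ↔
      ∃ j, P.Adj (x j) (y j) ∧ ∀ i, i ≠ j → x i = y i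
    simp only [Iso.map_adj_iff, EmbeddingLike.apply_eq_iff_eq]
    rw [σ.exists_congr_left]
    refine exists_congr fun j => and_congr (by simp) ?_
    rw [σ.forall_congr_left]
    simp

theorem wreath_apply (σ : Equiv.Perm (Fin k)) (ψ : Fin k → P ≃g P) (x : Fin k → V)
    (j : Fin k) :
    wreath σ ψ x j = ψ j (x (σ j)) :=
  rfl

theorem wreath_injective [Nontrivial V] :
    Injective fun p : Equiv.Perm (Fin k) × (Fin k → P ≃g P) => wreath p.1 p.2 := by
  rintro ⟨σ, ψ⟩ ⟨σ', ψ'⟩ h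
  have hval : ∀ (x : Fin k → V) j, ψ j (x (σ j)) = ψ' j (x (σ' j)) := fun x j =>
    congrArg (fun φ : boxProdPow P k ≃g boxProdPow P k => φ x j) h
  obtain ⟨u, v, huv⟩ := exists_pair_ne V
  obtain rfl : σ = σ' := Equiv.ext fun j => by
    by_contra hne
    have := hval (update (fun _ => v) (σ j) u) j
    rw [update_self, update_of_ne (Ne.symm hne), ← hval (fun _ => v) j] at this
    exact huv ((ψ j).injective this)
  exact Prod.ext rfl (funext fun j => DFunLike.ext _ _ fun w => hval (fun _ => w) j)

variable [Fintype V]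

theorem exists_mapsTo_layer (hP : P.IsPrime) (φ : boxProdPow P k ≃g boxProdPow P k)
    (i : Fin k) (a : Fin k → V) : ∃ j, Set.MapsTo φ (layer i a) (layer j (φ a)) := by
  classical
  set S := φ '' layer i a
  have hS : S = Set.univ.pi fun t => eval t '' S :=
    Set.eq_univ_pi_of_piecewise_mem ⟨φ a, a, mem_layer_self i a, rfl⟩ fun x hx y hy T =>
      piecewise_mem_image_layer (fun _ => hP.1) (fun _ => hP.1) φ hx hy T
  have hbij : Set.BijOn φ (layer i a) (Set.univ.pi fun t => eval t '' S) := by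
    rw [← hS]
    exact φ.injective.injOn.bijOn_image
  obtain ⟨j, hj⟩ := hP.exists_card_eq_one_of_iso
    ((layerIso (G := fun _ => P) i a).trans ((φ.induce hbij).trans (induceUnivPiIso _)))
  refine ⟨j, fun x hx t ht => ?_⟩
  exact congrArg Subtype.val <| Fintype.card_le_one_iff.mp (hj t ht).le
    ⟨φ x t, φ x, ⟨x, hx, rfl⟩, rfl⟩
    ⟨φ a t, φ a, ⟨a, mem_layer_self i a, rfl⟩, rfl⟩

theorem exists_image_layer_eq (hP : P.IsPrime) (φ : boxProdPow P k ≃g boxProdPow P k)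
    (i : Fin k) (a : Fin k → V) : ∃ j, φ '' layer i a = layer j (φ a) := by
  have := hP.nontrivial
  obtain ⟨j, hj⟩ := exists_mapsTo_layer hP φ i a
  obtain ⟨j', hj'⟩ := exists_mapsTo_layer hP φ.symm j (φ a)
  rw [φ.symm_apply_apply] at hj'
  obtain rfl : i = j' := eq_of_layer_subset fun x hx => by simpa using hj' (hj hx)
  exact ⟨j, hj.image_subset.antisymm fun z hz => ⟨φ.symm z, hj' hz, φ.apply_symm_apply z⟩⟩

noncomputable def layerDir (hP : P.IsPrime) (φ : boxProdPow P k ≃g boxProdPow P k)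
    (x : Fin k → V) (i : Fin k) : Fin k :=
  (exists_image_layer_eq hP φ i x).choose

theorem image_layer_eq (hP : P.IsPrime) (φ : boxProdPow P k ≃g boxProdPow P k)
    (x : Fin k → V) (i : Fin k) : φ '' layer i x = layer (layerDir hP φ x i) (φ x) :=
  (exists_image_layer_eq hP φ i x).choose_spec

theorem apply_mem_layer_layerDir (hP : P.IsPrime) (φ : boxProdPow P k ≃g boxProdPow P k)
    {i : Fin k} {x x' : Fin k → V} (h : x' ∈ layer i x) :
    φ x' ∈ layer (layerDir hP φ x i) (φ x) :=
  image_layer_eq hP φ x i ▸ Set.mem_image_of_mem φ h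

theorem layerDir_injective (hP : P.IsPrime) (φ : boxProdPow P k ≃g boxProdPow P k)
    (x : Fin k → V) : Injective (layerDir hP φ x) := by
  have := hP.nontrivial
  intro i i' h
  refine eq_of_layer_subset (a := x) (b := x) fun y hy => φ.injective.mem_set_image.mp ?_
  rw [image_layer_eq hP, ← h, ← image_layer_eq hP]
  exact Set.mem_image_of_mem φ hy

theorem layerDir_apply_eq_of_mem_layer (hP : P.IsPrime) (φ : boxProdPow P k ≃g boxProdPow P k)
    {m : Fin k} {x x' : Fin k → V} (h : x' ∈ layer m x) :
    layerDir hP φ x' m = layerDir hP φ x m := by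
  have := hP.nontrivial
  refine eq_of_layer_subset (a := φ x') (b := φ x) ?_
  rw [← image_layer_eq, ← image_layer_eq, layer_eq_of_mem h]

theorem layerDir_eq_of_mem_layer (hP : P.IsPrime) (φ : boxProdPow P k ≃g boxProdPow P k)
    {m : Fin k} {x x' : Fin k → V} (h : x' ∈ layer m x) :
    layerDir hP φ x' = layerDir hP φ x := by
  have := hP.nontrivial
  rcases eq_or_ne x' x with rfl | hne
  · rfl
  have hm := layerDir_apply_eq_of_mem_layer hP φ h
  funext i
  rcases eq_or_ne i m with rfl | him
  · exact hm
  obtain ⟨u, hu⟩ := exists_ne (x i)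
  -- the square `x, x', update x' i u, update x i u`
  have hsq : update x' i u ∈ layer m (update x i u) := fun t ht => by
    rcases eq_or_ne t i with rfl | hti
    · simp
    · rw [update_of_ne hti, update_of_ne hti, h t ht]
  refine (eq_of_square (apply_mem_layer_layerDir hP φ h) (φ.injective.ne hne)
    (apply_mem_layer_layerDir hP φ (update_mem_layer i x u)) (φ.injective.ne ?_)
    (apply_mem_layer_layerDir hP φ (update_mem_layer i x' u))
    (apply_mem_layer_layerDir hP φ hsq) ((layerDir_injective hP φ x).ne him)
    (hm ▸ (layerDir_injective hP φ x').ne him)).symm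
  exact fun hux => hu (by simpa using congrFun hux i)

theorem layerDir_eq (hP : P.IsPrime) (φ : boxProdPow P k ≃g boxProdPow P k) (x y : Fin k → V) :
    layerDir hP φ x = layerDir hP φ y :=
  eq_of_forall_mem_layer (s := Finset.univ)
    (fun _ _ _ _ h => layerDir_eq_of_mem_layer hP φ h) (by simp)

theorem exists_wreath_eq (hP : P.IsPrime) (φ : boxProdPow P k ≃g boxProdPow P k) :
    ∃ σ ψ, wreath σ ψ = φ := by
  have : Nonempty V := hP.1.nonempty
  let b : Fin k → V := fun _ => Classical.arbitrary V
  let π : Equiv.Perm (Fin k) :=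
    Equiv.ofBijective _ (layerDir_injective hP φ b).bijective_of_finite
  have hπ : ∀ x i, φ '' layer i x = layer (π i) (φ x) := fun x i => by
    rw [image_layer_eq hP, layerDir_eq hP φ x b]
    rfl
  have hcoord : ∀ i x, φ x (π i) = φ (update b i (x i)) (π i) := by
    intro i x
    refine eq_of_forall_mem_layer (f := fun x => φ x (π i)) (s := Finset.univ.erase i)
      (fun m hm y y' hy => ?_) fun t ht => ?_
    · have : φ y' ∈ layer (π m) (φ y) := hπ y m ▸ Set.mem_image_of_mem φ hy
      exact this (π i) (π.injective.ne (Finset.ne_of_mem_erase hm).symm)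
    · obtain rfl : t = i := by simpa using ht
      simp
  -- `ψ i v` unfolds to `φ (update b i v) (π i)`.
  let ψ : Fin k → P ≃g P := fun i =>
    (layerIso (G := fun _ => P) i b).trans
      ((φ.induce (hπ b i ▸ φ.injective.injOn.bijOn_image)).trans (layerIso (π i) (φ b)).symm)
  refine ⟨π.symm, fun j => ψ (π.symm j), DFunLike.ext _ _ fun x => funext fun j => ?_⟩
  obtain ⟨i, rfl⟩ := π.surjective j
  rw [wreath_apply, π.symm_apply_apply, hcoord i x]
  rfl

theorem wreath_bijective (hP : P.IsPrime) :
    Bijective fun p : Equiv.Perm (Fin k) × (Fin k → P ≃g P) => wreath p.1 p.2 :=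
  have := hP.nontrivial
  ⟨wreath_injective, fun φ =>
    let ⟨σ, ψ, h⟩ := exists_wreath_eq hP φ
    ⟨(σ, ψ), h⟩⟩

end boxProdPow

theorem card_aut_boxProdPow_general {V : Type} [Fintype V] (P : SimpleGraph V)
    (hP : P.IsPrime) (k : ℕ) :
    Nat.card (boxProdPow P k ≃g boxProdPow P k) =
      k.factorial * Nat.card (P ≃g P) ^ k := by
  rw [← Nat.card_eq_of_bijective _ (boxProdPow.wreath_bijective hP), Nat.card_prod, Nat.card_perm,
    Nat.card_fun, Nat.card_fin]

/-- (Sabidussi) For a prime graph `P` and `k ≥ 1`, the automorphism group of the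
`k`-fold box product `P^{□k}` has cardinality `k! ⬝ |Aut(P)|^k`. -/
theorem card_aut_boxProdPow {V : Type} [Fintype V] (P : SimpleGraph V)
    (hP : P.IsPrime) (k : ℕ) (hk : 0 < k) :
    Nat.card (boxProdPow P k ≃g boxProdPow P k) =
      k.factorial * Nat.card (P ≃g P) ^ k :=
  card_aut_boxProdPow_general P hP k
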